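/- Let G be a reductive group acting on finite-dimensional representations X and Y, with Y symplectic and the G-action on Y Hamiltonian with moment map μ_Y; let μ : T*X × Y → 𝔤^∨ be the total moment map (sum of the canonical moment map on T*X and μ_Y). For x ∈ X let μ_x : Y → (𝔤^x)^∨ be the composite of μ_Y with restriction to the stabilizer subalgebra 𝔤^x. Then for any x ∈ X, the intersection μ^{-1}(0) ∩ ({x} × X^∨ × Y) is isomorphic (as a set/variety) to the product Ker(X^∨ → (𝔤^x)^⊥) × μ_x^{-1}(0), where X^∨ → 𝔤^∨ is the dual of the action map g ↦ g.x; consequently dim(μ^{-1}(0) ∩ ({x} × X^∨ × Y)) = dim X − dim 𝔤.x + dim μ_x^{-1}(0), and dim(μ^{-1}(0) ∩ (G.x × X^∨ × Y)) = dim X + dim μ_x^{-1}(0). -/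

import Mathlib

/-!
On the slice over `x` the moment map equation says that `ξ` composed with the action map
`a : 𝔤 → X, η ↦ η.x` equals `-μY y` in `𝔤^∨`. Over a field the range of the dual of `a` is the
annihilator `(𝔤^x)^⊥` of its kernel, so the equation is solvable in `ξ` exactly when
`y ∈ μ_x⁻¹(0)`, and its solutions then form a torsor under `Ker(X^∨ → 𝔤^∨)`; choosing one
solution for each `y` splits the slice. The kernel has dimension `dim X - dim 𝔤.x` by
rank–nullity, since a linear map and its dual have the same rank. Over the orbit,
`(ξ, y) ↦ (ξ ∘ g, g⁻¹ • y)` carries the slice over `g • x` onto the slice over `x` by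
equivariance, which trivialises the family of slices along `G.x`.
-/

open Module LinearMap

namespace LinearMap

section

variable {R V W Y : Type*} [Ring R] [AddCommGroup V] [Module R V] [AddCommGroup W] [Module R W]

noncomputable def fiberEquivKerProd (A : V →ₗ[R] W) (ν : Y → W) :
    {p : V × Y // A p.1 + ν p.2 = 0} ≃ ker A × {y : Y // ν y ∈ range A} where
  toFun p :=
    have hy : ν p.1.2 ∈ range A := ⟨-p.1.1, by rw [map_neg, neg_eq_iff_add_eq_zero, p.2]⟩
    (⟨p.1.1 + (mem_range.mp hy).choose, by
      rw [mem_ker, map_add, (mem_range.mp hy).choose_spec, p.2]⟩, ⟨p.1.2, hy⟩)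
  invFun q := ⟨(q.1 - (mem_range.mp q.2.2).choose, q.2.1), by
    simp [(mem_range.mp q.2.2).choose_spec, mem_ker.mp q.1.2]⟩
  left_inv p := by simp
  right_inv q := by simp

end

section

variable {K V W : Type*} [Field K] [AddCommGroup V] [Module K V] [AddCommGroup W] [Module K W]

theorem mem_range_dualMap_iff {f : V →ₗ[K] W} {φ : Dual K V} :
    φ ∈ range f.dualMap ↔ ∀ v, f v = 0 → φ v = 0 := by
  simp only [range_dualMap_eq_dualAnnihilator_ker, Submodule.mem_dualAnnihilator, mem_ker]

theorem finrank_ker_dualMap [FiniteDimensional K W] (f : V →ₗ[K] W) :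
    finrank K (ker f.dualMap) = finrank K W - finrank K (range f) := by
  rw [← finrank_range_dualMap_eq_finrank_range, ← Subspace.dual_finrank_eq,
    ← finrank_range_add_finrank_ker f.dualMap, Nat.add_sub_cancel_left]

end

end LinearMap

namespace MulAction

variable {G X Z : Type*} [Group G] [MulAction G X]

noncomputable def orbitFiberEquivProd (x : X) (S : X → Set Z) (e : ∀ g : G, S (g • x) ≃ S x) :
    {p : X × Z // p.1 ∈ orbit G x ∧ p.2 ∈ S p.1} ≃ orbit G x × S x :=
  calc {p : X × Z // p.1 ∈ orbit G x ∧ p.2 ∈ S p.1}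
      ≃ Σ o : orbit G x, S o :=
        { toFun p := ⟨⟨p.1.1, p.2.1⟩, ⟨p.1.2, p.2.2⟩⟩
          invFun q := ⟨(q.1.1, q.2.1), q.1.2, q.2.2⟩ }
    _ ≃ orbit G x × S x := Equiv.sigmaEquivProdOfEquiv fun o =>
        (Equiv.setCongr (congrArg S (mem_orbit_iff.mp o.2).choose_spec.symm)).trans (e _)

end MulAction

section MomentMap

variable {K 𝔤 X Y : Type*} [Field K] [AddCommGroup 𝔤] [Module K 𝔤] [AddCommGroup X] [Module K X]
  (ρ : 𝔤 →ₗ[K] X →ₗ[K] X) (μY : Y → Dual K 𝔤)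

/-- `μ⁻¹(0) ∩ ({x} × X^∨ × Y)` for `μ(x, ξ, y)(η) = ξ(η.x) + μY y η`. -/
def momentSlice (x : X) : Set (Dual K X × Y) :=
  {p | ∀ g, p.1 (ρ g x) + μY p.2 g = 0}

theorem mem_momentSlice_iff {x : X} {p : Dual K X × Y} :
    p ∈ momentSlice ρ μY x ↔ (ρ.flip x).dualMap p.1 + μY p.2 = 0 := by
  simp [momentSlice, LinearMap.ext_iff]

noncomputable def momentSliceEquiv (x : X) :
    momentSlice ρ μY x ≃
      ker (ρ.flip x).dualMap × {y : Y // ∀ g : 𝔤, ρ g x = 0 → μY y g = 0} :=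
  (Equiv.subtypeEquivRight fun _ => mem_momentSlice_iff ρ μY).trans <|
    (fiberEquivKerProd _ μY).trans <|
      (Equiv.refl _).prodCongr (Equiv.subtypeEquivRight fun _ => mem_range_dualMap_iff)

variable {G : Type*} [Group G] [DistribMulAction G X] [SMulCommClass G K X]
  [DistribMulAction G 𝔤] [MulAction G Y]
  {ρ μY}

def momentSliceSMulEquiv (hρ : ∀ (g : G) (η : 𝔤) (v : X), ρ (g • η) (g • v) = g • ρ η v)
    (hμY : ∀ (g : G) (y : Y) (η : 𝔤), μY (g • y) (g • η) = μY y η) (g : G) (x : X) :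
    momentSlice ρ μY (g • x) ≃ momentSlice ρ μY x :=
  Equiv.subtypeEquiv
    ((DistribMulAction.toLinearEquiv K X g).dualMap.toEquiv.prodCongr (MulAction.toPerm g⁻¹))
    fun p => by
      simp only [momentSlice, Set.mem_ofPred_eq]
      rw [← (MulAction.toPerm g : Equiv.Perm 𝔤).forall_congr_right]
      refine forall_congr' fun η => ?_
      simp only [LinearEquiv.coe_toEquiv, Equiv.prodCongr_apply, Prod.map_fst, Prod.map_snd,
        LinearEquiv.dualMap_apply, DistribMulAction.toLinearEquiv_apply, MulAction.toPerm_apply, hρ]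
      rw [← hμY g (g⁻¹ • p.2) η, smul_inv_smul]

end MomentMap

theorem stmt18
    (𝔤 X Y : Type*)
    [AddCommGroup 𝔤] [Module ℂ 𝔤]
    [AddCommGroup X] [Module ℂ X] [FiniteDimensional ℂ X]
    (ρ : 𝔤 →ₗ[ℂ] X →ₗ[ℂ] X)
    (μY : Y → Dual ℂ 𝔤)
    (G : Type*) [Group G]
    [DistribMulAction G X] [SMulCommClass G ℂ X]
    [DistribMulAction G 𝔤]
    [MulAction G Y]
    (hρ : ∀ (g : G) (η : 𝔤) (v : X), ρ (g • η) (g • v) = g • ρ η v)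
    (hμY : ∀ (g : G) (y : Y) (η : 𝔤), μY (g • y) (g • η) = μY y η)
    (x : X) :
    -- the slice over x is a product:
    Nonempty ({p : Dual ℂ X × Y // ∀ g : 𝔤, p.1 (ρ g x) + μY p.2 g = 0} ≃
      (LinearMap.ker ((ρ.flip x).dualMap) × {y : Y // ∀ g : 𝔤, ρ g x = 0 → μY y g = 0})) ∧
    -- the kernel factor has dimension dim X − dim 𝔤.x:
    finrank ℂ (LinearMap.ker ((ρ.flip x).dualMap))
      = finrank ℂ X - finrank ℂ (LinearMap.range (ρ.flip x)) ∧
    -- the slice over the orbit G.x is a product with the orbit: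
    Nonempty ({p : X × Dual ℂ X × Y //
        p.1 ∈ MulAction.orbit G x ∧ ∀ g : 𝔤, p.2.1 (ρ g p.1) + μY p.2.2 g = 0} ≃
      (MulAction.orbit G x ×
        LinearMap.ker ((ρ.flip x).dualMap) ×
        {y : Y // ∀ g : 𝔤, ρ g x = 0 → μY y g = 0})) :=
  ⟨⟨momentSliceEquiv ρ μY x⟩, finrank_ker_dualMap (ρ.flip x),
    ⟨(MulAction.orbitFiberEquivProd x (momentSlice ρ μY)
        (momentSliceSMulEquiv hρ hμY · x)).trans
      ((Equiv.refl _).prodCongr (momentSliceEquiv ρ μY x))⟩⟩
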